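/- For all z', Z' ∈ ℝ^d with |z'| ≤ C and |Z'| ≤ C: |G_g(z', Z') − G(z', Z')| ≤ 2(1 + (2(BC + R)/γ) · exp(2(BC + R)/γ)) · sup_{a∈𝒜} |(f(a) − g(a))·z'|. -/

import Mathlib

open MeasureTheory
open scoped RealInnerProductSpace

/-- The Gibbs probability density `π_z(a) ∝ exp((f(a)·z + r(a))/γ)` on the set `𝒜`. -/
noncomputable def gibbs {m d : ℕ} (𝒜 : Set (EuclideanSpace ℝ (Fin m))) (γ : ℝ)
    (f : EuclideanSpace ℝ (Fin m) → EuclideanSpace ℝ (Fin d))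
    (r : EuclideanSpace ℝ (Fin m) → ℝ)
    (z : EuclideanSpace ℝ (Fin d)) (a : EuclideanSpace ℝ (Fin m)) : ℝ :=
  Real.exp ((⟪f a, z⟫ + r a) / γ) /
    ∫ a' in 𝒜, Real.exp ((⟪f a', z⟫ + r a') / γ)

/-- `G_ρ(z,Z) = ∫_𝒜 (f(a)·Z + r(a) − γ log ρ_z(a)) ρ_z(a) da`, where `ρ_z` is the
Gibbs density built from the drift `g` (and `G = G_π` corresponds to `g = f`). -/
noncomputable def gibbsG {m d : ℕ} (𝒜 : Set (EuclideanSpace ℝ (Fin m))) (γ : ℝ)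
    (f g : EuclideanSpace ℝ (Fin m) → EuclideanSpace ℝ (Fin d))
    (r : EuclideanSpace ℝ (Fin m) → ℝ)
    (z Z : EuclideanSpace ℝ (Fin d)) : ℝ :=
  ∫ a in 𝒜, (⟪f a, Z⟫ + r a - γ * Real.log (gibbs 𝒜 γ g r z a)) * gibbs 𝒜 γ g r z a

/-!
Write `ρ ∝ exp (ψ / γ)` with partition function `Z(ψ / γ) = ∫ exp (ψ / γ)`; then
`∫ (u - γ log ρ) ρ = E_ρ[u - ψ] + γ log Z(ψ / γ)`. Here `u = f·Z' + r`, `ψ = g·z' + r`, and for `G`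
the potential is `φ = f·z' + r`; all three are bounded by `K = BC + R`, and `|φ - ψ| ≤ ε`, the
supremum in the statement. Since `exp (φ / γ) / exp (ψ / γ)` lies in `[e^{-ε/γ}, e^{ε/γ}]`, the log
partition functions differ by at most `ε / γ`, and Gibbs averages of the function `u - φ`, bounded
by `2K`, differ by at most `2 · 2K (e^{ε/γ} - 1)`. The remaining term `E_ρ[φ - ψ]` is at most `ε`,
and `e^x - 1 ≤ x e^x` turns the total into the stated bound.
-/

open Real

lemma exp_sub_one_le_mul_exp (x : ℝ) : exp x - 1 ≤ x * exp x := by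
  have h : (1 - x) * exp x ≤ exp (-x) * exp x :=
    mul_le_mul_of_nonneg_right (one_sub_le_exp_neg x) (exp_pos x).le
  rw [← exp_add, neg_add_cancel, exp_zero] at h
  linarith

lemma exp_sub_one_le_mul_exp_of_le {x y : ℝ} (hx : 0 ≤ x) (hxy : x ≤ y) :
    exp x - 1 ≤ x * exp y :=
  (exp_sub_one_le_mul_exp x).trans (by gcongr)

lemma abs_exp_sub_one_le_exp_sub_one {x c : ℝ} (h : |x| ≤ c) : |exp x - 1| ≤ exp c - 1 := by
  obtain ⟨hcx, hxc⟩ := abs_le.1 h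
  have hc : exp (-c) * exp c = 1 := by rw [← exp_add, neg_add_cancel, exp_zero]
  rw [abs_le]
  constructor
  · nlinarith [exp_le_exp.2 hcx, sq_nonneg (exp c - 1), exp_pos c]
  · linarith [exp_le_exp.2 hxc]

lemma abs_inner_add_le {E : Type*} [NormedAddCommGroup E] [InnerProductSpace ℝ E]
    {x v : E} {s B C R : ℝ} (hx : ‖x‖ ≤ B) (hv : ‖v‖ ≤ C) (hs : |s| ≤ R) :
    |⟪x, v⟫ + s| ≤ B * C + R := by
  have hxv : |⟪x, v⟫| ≤ B * C := (abs_real_inner_le_norm x v).trans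
    (mul_le_mul hx hv (norm_nonneg v) ((norm_nonneg x).trans hx))
  exact (abs_add_le _ _).trans (add_le_add hxv hs)

section Gibbs

variable {α : Type*} [MeasurableSpace α] {μ : Measure α}

noncomputable def partitionFn (μ : Measure α) (θ : α → ℝ) : ℝ := ∫ a, exp (θ a) ∂μ

noncomputable def gibbsDensity (μ : Measure α) (θ : α → ℝ) (a : α) : ℝ :=
  exp (θ a) / partitionFn μ θ

noncomputable def gibbsMean (μ : Measure α) (θ w : α → ℝ) : ℝ :=
  (∫ a, w a * exp (θ a) ∂μ) / partitionFn μ θ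

noncomputable def entropicValue (μ : Measure α) (γ : ℝ) (u ψ : α → ℝ) : ℝ :=
  ∫ a, (u a - γ * log (gibbsDensity μ (fun a => ψ a / γ) a)) *
    gibbsDensity μ (fun a => ψ a / γ) a ∂μ

variable {θ η w : α → ℝ}

lemma integrable_exp_of_le [IsFiniteMeasure μ] {c : ℝ} (hθ : AEStronglyMeasurable θ μ)
    (hc : ∀ᵐ a ∂μ, θ a ≤ c) : Integrable (fun a => exp (θ a)) μ :=
  .of_bound (continuous_exp.comp_aestronglyMeasurable hθ) (exp c) <| hc.mono fun a ha => by
    rw [norm_of_nonneg (exp_pos _).le]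
    exact exp_le_exp.2 ha

lemma partitionFn_pos [NeZero μ] (hθ : Integrable (fun a => exp (θ a)) μ) :
    0 < partitionFn μ θ :=
  integral_exp_pos hθ

lemma log_partitionFn_le_add [NeZero μ] {c : ℝ} (hθ : Integrable (fun a => exp (θ a)) μ)
    (hη : Integrable (fun a => exp (η a)) μ) (h : ∀ᵐ a ∂μ, θ a ≤ η a + c) :
    log (partitionFn μ θ) ≤ log (partitionFn μ η) + c := by
  have hle : partitionFn μ θ ≤ exp c * partitionFn μ η := by
    rw [partitionFn, partitionFn, ← integral_const_mul]
    refine integral_mono_ae hθ (hη.const_mul _) (h.mono fun a ha => ?_)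
    dsimp only
    rw [← exp_add]
    exact exp_le_exp.2 (by linarith)
  calc log (partitionFn μ θ) ≤ log (exp c * partitionFn μ η) :=
        log_le_log (partitionFn_pos hθ) hle
    _ = log (partitionFn μ η) + c := by
        rw [log_mul (exp_ne_zero c) (partitionFn_pos hη).ne', log_exp, add_comm]

lemma abs_log_partitionFn_sub_le [NeZero μ] {c : ℝ} (hθ : Integrable (fun a => exp (θ a)) μ)
    (hη : Integrable (fun a => exp (η a)) μ) (h : ∀ᵐ a ∂μ, |θ a - η a| ≤ c) :
    |log (partitionFn μ θ) - log (partitionFn μ η)| ≤ c := by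
  have hθη := log_partitionFn_le_add hθ hη (h.mono fun a ha => by linarith [(abs_le.1 ha).2])
  have hηθ := log_partitionFn_le_add hη hθ (h.mono fun a ha => by linarith [(abs_le.1 ha).1])
  rw [abs_le]
  constructor <;> linarith

lemma abs_integral_mul_exp_le {K : ℝ} (hθ : Integrable (fun a => exp (θ a)) μ)
    (hw : ∀ᵐ a ∂μ, |w a| ≤ K) : |∫ a, w a * exp (θ a) ∂μ| ≤ K * partitionFn μ θ := by
  rw [partitionFn, ← integral_const_mul, ← Real.norm_eq_abs]
  refine norm_integral_le_of_norm_le (hθ.const_mul K) (hw.mono fun a ha => ?_)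
  rw [norm_mul, norm_of_nonneg (exp_pos _).le]
  exact mul_le_mul_of_nonneg_right ha (exp_pos _).le

lemma abs_gibbsMean_le [NeZero μ] {K : ℝ} (hθ : Integrable (fun a => exp (θ a)) μ)
    (hw : ∀ᵐ a ∂μ, |w a| ≤ K) : |gibbsMean μ θ w| ≤ K := by
  have hZ := partitionFn_pos hθ
  rw [gibbsMean, abs_div, abs_of_pos hZ, div_le_iff₀ hZ]
  exact abs_integral_mul_exp_le hθ hw

lemma abs_exp_sub_exp_le {c : ℝ} (h : ∀ᵐ a ∂μ, |θ a - η a| ≤ c) :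
    ∀ᵐ a ∂μ, |exp (θ a) - exp (η a)| ≤ (exp c - 1) * exp (η a) :=
  h.mono fun a ha => by
    have hsplit : exp (θ a) = exp (θ a - η a) * exp (η a) := by rw [← exp_add, sub_add_cancel]
    rw [hsplit, ← sub_one_mul, abs_mul, abs_of_pos (exp_pos _)]
    exact mul_le_mul_of_nonneg_right (abs_exp_sub_one_le_exp_sub_one ha) (exp_pos _).le

lemma abs_gibbsMean_sub_le [NeZero μ] {c K : ℝ} (hθ : Integrable (fun a => exp (θ a)) μ)
    (hη : Integrable (fun a => exp (η a)) μ) (hθη : ∀ᵐ a ∂μ, |θ a - η a| ≤ c)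
    (hw : AEStronglyMeasurable w μ) (hwK : ∀ᵐ a ∂μ, |w a| ≤ K) :
    |gibbsMean μ θ w - gibbsMean μ η w| ≤ 2 * K * (exp c - 1) := by
  have hexp := abs_exp_sub_exp_le hθη
  have hZ : |partitionFn μ θ - partitionFn μ η| ≤ (exp c - 1) * partitionFn μ η := by
    rw [partitionFn, partitionFn, ← integral_sub hθ hη, ← integral_const_mul, ← Real.norm_eq_abs]
    exact norm_integral_le_of_norm_le (hη.const_mul _) hexp
  have hJ : |∫ a, w a * exp (θ a) ∂μ - ∫ a, w a * exp (η a) ∂μ| ≤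
      K * (exp c - 1) * partitionFn μ η := by
    rw [← integral_sub (hθ.bdd_mul hw hwK) (hη.bdd_mul hw hwK), partitionFn,
      ← integral_const_mul, ← Real.norm_eq_abs]
    refine norm_integral_le_of_norm_le (hη.const_mul _) ((hwK.and hexp).mono fun a ha => ?_)
    rw [← mul_sub, norm_mul, mul_assoc]
    exact mul_le_mul ha.1 ha.2 (abs_nonneg _) ((abs_nonneg _).trans ha.1)
  have hMθ := abs_gibbsMean_le hθ hwK
  have hZη := partitionFn_pos hη
  have hmean : gibbsMean μ θ w - gibbsMean μ η w =
      (∫ a, w a * exp (θ a) ∂μ - ∫ a, w a * exp (η a) ∂μ) / partitionFn μ η -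
        gibbsMean μ θ w * ((partitionFn μ θ - partitionFn μ η) / partitionFn μ η) := by
    rw [gibbsMean, gibbsMean]
    field_simp [(partitionFn_pos hθ).ne']
    ring
  calc |gibbsMean μ θ w - gibbsMean μ η w|
      ≤ |∫ a, w a * exp (θ a) ∂μ - ∫ a, w a * exp (η a) ∂μ| / partitionFn μ η +
          |gibbsMean μ θ w| * (|partitionFn μ θ - partitionFn μ η| / partitionFn μ η) := by
        rw [hmean]
        refine (abs_sub _ _).trans_eq ?_
        rw [abs_div, abs_mul, abs_div, abs_of_pos hZη]
    _ ≤ K * (exp c - 1) + K * (exp c - 1) := by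
        gcongr
        · rwa [div_le_iff₀ hZη]
        · exact (abs_nonneg _).trans hMθ
        · rwa [div_le_iff₀ hZη]
    _ = 2 * K * (exp c - 1) := by ring

lemma gibbsMean_add {v : α → ℝ} (hv : Integrable (fun a => v a * exp (θ a)) μ)
    (hw : Integrable (fun a => w a * exp (θ a)) μ) :
    gibbsMean μ θ (fun a => v a + w a) = gibbsMean μ θ v + gibbsMean μ θ w := by
  simp only [gibbsMean, add_mul, integral_add hv hw, add_div]

lemma integral_gibbsDensity [NeZero μ] (hθ : Integrable (fun a => exp (θ a)) μ) :
    ∫ a, gibbsDensity μ θ a ∂μ = 1 := by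
  simp only [gibbsDensity, integral_div]
  exact div_self (partitionFn_pos hθ).ne'

lemma entropicValue_eq [NeZero μ] {γ : ℝ} {u ψ : α → ℝ} (hγ : γ ≠ 0)
    (hψ : Integrable (fun a => exp (ψ a / γ)) μ)
    (huψ : Integrable (fun a => (u a - ψ a) * exp (ψ a / γ)) μ) :
    entropicValue μ γ u ψ = gibbsMean μ (fun a => ψ a / γ) (fun a => u a - ψ a) +
      γ * log (partitionFn μ (fun a => ψ a / γ)) := by
  have hZ := partitionFn_pos hψ
  have hlog : ∀ a, log (gibbsDensity μ (fun a => ψ a / γ) a) =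
      ψ a / γ - log (partitionFn μ (fun a => ψ a / γ)) := fun a => by
    rw [gibbsDensity, log_div (exp_ne_zero _) hZ.ne', log_exp]
  have hsplit : ∀ a, (u a - γ * log (gibbsDensity μ (fun a => ψ a / γ) a)) *
      gibbsDensity μ (fun a => ψ a / γ) a =
      (u a - ψ a) * exp (ψ a / γ) / partitionFn μ (fun a => ψ a / γ) +
        γ * log (partitionFn μ (fun a => ψ a / γ)) * gibbsDensity μ (fun a => ψ a / γ) a :=
    fun a => by
      rw [hlog, gibbsDensity]
      field_simp
      ring
  have hρ : Integrable (gibbsDensity μ (fun a => ψ a / γ)) μ := hψ.div_const _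
  rw [entropicValue, integral_congr_ae (ae_of_all _ hsplit), integral_add (huψ.div_const _)
    (hρ.const_mul _), integral_div, integral_const_mul, integral_gibbsDensity hψ, mul_one,
    gibbsMean]

variable [IsFiniteMeasure μ] [NeZero μ]

theorem abs_entropicValue_sub_le {γ K ε : ℝ} {u φ ψ : α → ℝ} (hγ : 0 < γ)
    (hu : AEStronglyMeasurable u μ) (hφ : AEStronglyMeasurable φ μ)
    (hψ : AEStronglyMeasurable ψ μ) (huK : ∀ᵐ a ∂μ, |u a| ≤ K) (hφK : ∀ᵐ a ∂μ, |φ a| ≤ K)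
    (hψK : ∀ᵐ a ∂μ, |ψ a| ≤ K) (hφψ : ∀ᵐ a ∂μ, |φ a - ψ a| ≤ ε) :
    |entropicValue μ γ u ψ - entropicValue μ γ u φ| ≤ 4 * K * (exp (ε / γ) - 1) + 2 * ε := by
  have hexp : ∀ {χ : α → ℝ}, AEStronglyMeasurable χ μ → (∀ᵐ a ∂μ, |χ a| ≤ K) →
      Integrable (fun a => exp (χ a / γ)) μ := fun hχ hχK =>
    integrable_exp_of_le ((continuous_id.div_const γ).comp_aestronglyMeasurable hχ)
      (hχK.mono fun a ha => div_le_div_of_nonneg_right (le_of_abs_le ha) hγ.le)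
  have hsub : ∀ {χ : α → ℝ}, (∀ᵐ a ∂μ, |χ a| ≤ K) → ∀ᵐ a ∂μ, |u a - χ a| ≤ 2 * K :=
    fun {χ} hχK => (huK.and hχK).mono fun a ha => by linarith [abs_sub (u a) (χ a)]
  have hθ := hexp hφ hφK
  have hη := hexp hψ hψK
  have hθη : ∀ᵐ a ∂μ, |φ a / γ - ψ a / γ| ≤ ε / γ := hφψ.mono fun a ha => by
    rw [← sub_div, abs_div, abs_of_pos hγ]
    exact div_le_div_of_nonneg_right ha hγ.le
  have hdiff : entropicValue μ γ u ψ - entropicValue μ γ u φ =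
      (gibbsMean μ (fun a => ψ a / γ) (fun a => u a - φ a) -
        gibbsMean μ (fun a => φ a / γ) (fun a => u a - φ a)) +
      gibbsMean μ (fun a => ψ a / γ) (fun a => φ a - ψ a) +
      γ * (log (partitionFn μ (fun a => ψ a / γ)) - log (partitionFn μ (fun a => φ a / γ))) := by
    rw [entropicValue_eq hγ.ne' hη (hη.bdd_mul (hu.sub hψ) (hsub hψK)),
      entropicValue_eq hγ.ne' hθ (hθ.bdd_mul (hu.sub hφ) (hsub hφK)),
      show (fun a => u a - ψ a) = fun a => (u a - φ a) + (φ a - ψ a) by ext; ring,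
      gibbsMean_add (v := fun a => u a - φ a) (w := fun a => φ a - ψ a)
        (hη.bdd_mul (hu.sub hφ) (hsub hφK)) (hη.bdd_mul (hφ.sub hψ) hφψ)]
    ring
  have hlog := abs_log_partitionFn_sub_le hη hθ (hθη.mono fun a ha => by rwa [abs_sub_comm])
  rw [hdiff]
  calc _ ≤ 2 * (2 * K) * (exp (ε / γ) - 1) + ε + γ * (ε / γ) := by
        refine (abs_add_three _ _ _).trans (add_le_add_three ?_ ?_ ?_)
        · rw [abs_sub_comm]
          exact abs_gibbsMean_sub_le hθ hη hθη (hu.sub hφ) (hsub hφK)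
        · exact abs_gibbsMean_le hη hφψ
        · rw [abs_mul, abs_of_pos hγ]
          exact mul_le_mul_of_nonneg_left hlog hγ.le
    _ = 4 * K * (exp (ε / γ) - 1) + 2 * ε := by field_simp; ring

end Gibbs

lemma gibbsG_eq_entropicValue {m d : ℕ} (𝒜 : Set (EuclideanSpace ℝ (Fin m))) (γ : ℝ)
    (f g : EuclideanSpace ℝ (Fin m) → EuclideanSpace ℝ (Fin d))
    (r : EuclideanSpace ℝ (Fin m) → ℝ) (z Z : EuclideanSpace ℝ (Fin d)) :
    gibbsG 𝒜 γ f g r z Z =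
      entropicValue (volume.restrict 𝒜) γ (fun a => ⟪f a, Z⟫ + r a) (fun a => ⟪g a, z⟫ + r a) :=
  rfl

lemma abs_gibbsG_sub_le {m d : ℕ} {𝒜 : Set (EuclideanSpace ℝ (Fin m))} (h𝒜 : IsCompact 𝒜)
    (h𝒜0 : 0 < volume 𝒜) {γ C B R ε : ℝ} (hγ : 0 < γ)
    {f g : EuclideanSpace ℝ (Fin m) → EuclideanSpace ℝ (Fin d)} {r : EuclideanSpace ℝ (Fin m) → ℝ}
    (hf : Measurable f) (hg : Measurable g) (hr : Measurable r)
    (hfB : ∀ a ∈ 𝒜, ‖f a‖ ≤ B) (hgB : ∀ a ∈ 𝒜, ‖g a‖ ≤ B) (hrR : ∀ a ∈ 𝒜, |r a| ≤ R)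
    {z Z : EuclideanSpace ℝ (Fin d)} (hz : ‖z‖ ≤ C) (hZ : ‖Z‖ ≤ C)
    (hε : ∀ a ∈ 𝒜, |⟪f a - g a, z⟫| ≤ ε) :
    |gibbsG 𝒜 γ f g r z Z - gibbsG 𝒜 γ f f r z Z| ≤
      4 * (B * C + R) * (exp (ε / γ) - 1) + 2 * ε := by
  have : IsFiniteMeasure (volume.restrict 𝒜) :=
    isFiniteMeasure_restrict.2 h𝒜.measure_lt_top.ne
  have : NeZero (volume.restrict 𝒜) := ⟨by simpa [Measure.restrict_eq_zero] using h𝒜0.ne'⟩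
  have hbound {P : EuclideanSpace ℝ (Fin m) → Prop} (h : ∀ a ∈ 𝒜, P a) :
      ∀ᵐ a ∂volume.restrict 𝒜, P a :=
    ae_restrict_of_forall_mem h𝒜.measurableSet h
  rw [gibbsG_eq_entropicValue, gibbsG_eq_entropicValue]
  refine abs_entropicValue_sub_le hγ ((hf.inner measurable_const).add hr).aestronglyMeasurable
    ((hf.inner measurable_const).add hr).aestronglyMeasurable
    ((hg.inner measurable_const).add hr).aestronglyMeasurable
    (hbound fun a ha => abs_inner_add_le (hfB a ha) hZ (hrR a ha))
    (hbound fun a ha => abs_inner_add_le (hfB a ha) hz (hrR a ha))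
    (hbound fun a ha => abs_inner_add_le (hgB a ha) hz (hrR a ha)) (hbound fun a ha => ?_)
  rw [add_sub_add_right_eq_sub, ← inner_sub_left]
  exact hε a ha

theorem stmt12_general {m d : ℕ}
    (𝒜 : Set (EuclideanSpace ℝ (Fin m)))
    (h𝒜 : IsCompact 𝒜) (h𝒜0 : 0 < volume 𝒜)
    (γ C B R : ℝ) (hγ : 0 < γ)
    (f g : EuclideanSpace ℝ (Fin m) → EuclideanSpace ℝ (Fin d))
    (r : EuclideanSpace ℝ (Fin m) → ℝ)
    (hf : Measurable f) (hg : Measurable g) (hr : Measurable r)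
    (hfB : ∀ a ∈ 𝒜, ‖f a‖ ≤ B) (hgB : ∀ a ∈ 𝒜, ‖g a‖ ≤ B)
    (hrR : ∀ a ∈ 𝒜, |r a| ≤ R)
    (z' Z' : EuclideanSpace ℝ (Fin d)) (hz' : ‖z'‖ ≤ C) (hZ' : ‖Z'‖ ≤ C) :
    |gibbsG 𝒜 γ f g r z' Z' - gibbsG 𝒜 γ f f r z' Z'| ≤
      2 * (1 + 2 * (B * C + R) / γ * Real.exp (2 * (B * C + R) / γ)) *
        sSup ((fun a => |⟪f a - g a, z'⟫|) '' 𝒜) := by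
  obtain ⟨a₀, ha₀⟩ := nonempty_of_measure_ne_zero h𝒜0.ne'
  have hK : 0 ≤ B * C + R := (abs_nonneg _).trans (abs_inner_add_le (hfB a₀ ha₀) hz' (hrR a₀ ha₀))
  have hdiff : ∀ a ∈ 𝒜, |⟪f a - g a, z'⟫| ≤ 2 * (B * C + R) := fun a ha => by
    rw [inner_sub_left, ← add_sub_add_right_eq_sub _ _ (r a)]
    linarith [abs_sub (⟪f a, z'⟫ + r a) (⟪g a, z'⟫ + r a),
      abs_inner_add_le (hfB a ha) hz' (hrR a ha), abs_inner_add_le (hgB a ha) hz' (hrR a ha)]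
  set ε := sSup ((fun a => |⟪f a - g a, z'⟫|) '' 𝒜)
  have hdiffε : ∀ a ∈ 𝒜, |⟪f a - g a, z'⟫| ≤ ε := fun a ha =>
    le_csSup ⟨_, Set.forall_mem_image.2 hdiff⟩ (Set.mem_image_of_mem _ ha)
  have hε : 0 ≤ ε := (abs_nonneg _).trans (hdiffε a₀ ha₀)
  have hε2K : ε ≤ 2 * (B * C + R) := csSup_le ⟨_, a₀, ha₀, rfl⟩ (Set.forall_mem_image.2 hdiff)
  calc _ ≤ 4 * (B * C + R) * (exp (ε / γ) - 1) + 2 * ε :=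
        abs_gibbsG_sub_le h𝒜 h𝒜0 hγ hf hg hr hfB hgB hrR hz' hZ' hdiffε
    _ ≤ 4 * (B * C + R) * (ε / γ * exp (2 * (B * C + R) / γ)) + 2 * ε := by
        gcongr
        exact exp_sub_one_le_mul_exp_of_le (by positivity) (by gcongr)
    _ = _ := by ring

theorem stmt12 {m d : ℕ}
    (𝒜 : Set (EuclideanSpace ℝ (Fin m)))
    (h𝒜 : IsCompact 𝒜) (h𝒜0 : 0 < volume 𝒜) (h𝒜fin : volume 𝒜 < ⊤)
    (γ C B R : ℝ) (hγ : 0 < γ) (hC : 0 < C) (hB : 0 < B) (hR : 0 < R)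
    (f g : EuclideanSpace ℝ (Fin m) → EuclideanSpace ℝ (Fin d))
    (r : EuclideanSpace ℝ (Fin m) → ℝ)
    (hf : Measurable f) (hg : Measurable g) (hr : Measurable r)
    (hfB : ∀ a ∈ 𝒜, ‖f a‖ ≤ B) (hgB : ∀ a ∈ 𝒜, ‖g a‖ ≤ B)
    (hrR : ∀ a ∈ 𝒜, |r a| ≤ R)
    (z' Z' : EuclideanSpace ℝ (Fin d)) (hz' : ‖z'‖ ≤ C) (hZ' : ‖Z'‖ ≤ C) :
    |gibbsG 𝒜 γ f g r z' Z' - gibbsG 𝒜 γ f f r z' Z'| ≤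
      2 * (1 + 2 * (B * C + R) / γ * Real.exp (2 * (B * C + R) / γ)) *
        sSup ((fun a => |⟪f a - g a, z'⟫|) '' 𝒜) :=
  stmt12_general 𝒜 h𝒜 h𝒜0 γ C B R hγ f g r hf hg hr hfB hgB hrR z' Z' hz' hZ'
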